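/- arXiv:1906.08769 — 2 statements merged into one kernel-verified Lean document; each statement's English description precedes it below -/
import Mathlib

section
/- Let V be a finite-rank free ℤ-module with a symmetric bilinear form, K ∈ V with ind(E) := 1 + (1/2)·E·(E-K), and let C₁,…,Cₘ ∈ V be pairwise orthogonal (Cᵢ·Cⱼ = 0 for i ≠ j) with Cᵢ·Cᵢ = -1 and K·Cᵢ = -1 for each i. Then for any D ∈ V, ind(D + Σᵢ (D·Cᵢ)·Cᵢ) = ind(D) + (1/2)·Σᵢ (D·Cᵢ)·((D·Cᵢ) + 1). -/
/-- Eq. (2.30)/(2.31): for pairwise orthogonal `(-1)`-curves `Cᵢ` with `K·Cᵢ = -1`,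
`ind(D + Σᵢ (D·Cᵢ)Cᵢ) = ind(D) + ½ Σᵢ (D·Cᵢ)((D·Cᵢ)+1)`, with `ind(E) = 1 + ½E·(E-K)`. -/
theorem stmt_2 {V : Type*} [AddCommGroup V] [Module ℤ V] [Module.Free ℤ V] [Module.Finite ℤ V]
    (B : V →ₗ[ℤ] V →ₗ[ℤ] ℤ) (hsymm : ∀ x y, B x y = B y x)
    (K : V) {m : ℕ} (C : Fin m → V)
    (horth : ∀ i j, i ≠ j → B (C i) (C j) = 0)
    (hCC : ∀ i, B (C i) (C i) = -1) (hKC : ∀ i, B K (C i) = -1)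
    (D : V) :
    1 + (B (D + ∑ i, (B D (C i)) • C i) ((D + ∑ i, (B D (C i)) • C i) - K) : ℚ) / 2
      = (1 + (B D (D - K) : ℚ) / 2)
        + (∑ i, (B D (C i) : ℚ) * ((B D (C i) : ℚ) + 1)) / 2 := by
  set S := ∑ i, (B D (C i)) • C i with hS
  have hDS : B D S = ∑ i, (B D (C i)) * (B D (C i)) := by
    simp [hS, map_sum, map_smul, mul_comm]
  have hSD : B S D = ∑ i, (B D (C i)) * (B D (C i)) := by
    rw [hsymm]; exact hDS
  have hSS : B S S = -∑ i, (B D (C i)) * (B D (C i)) := by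
    simp only [hS, map_sum, map_smul, LinearMap.sum_apply, LinearMap.smul_apply,
      Finset.smul_sum, smul_eq_mul]
    rw [← Finset.sum_neg_distrib]
    refine Finset.sum_congr rfl fun i _ => ?_
    rw [Finset.sum_eq_single i]
    · simp [map_smul, hCC i]
    · intro j _ hj; simp [map_smul, horth j i hj]
    · simp
  have hSK : B S K = -∑ i, B D (C i) := by
    simp only [hS, map_sum, LinearMap.sum_apply, LinearMap.smul_apply, smul_eq_mul]
    rw [← Finset.sum_neg_distrib]
    refine Finset.sum_congr rfl fun i _ => ?_
    simp [map_smul, hsymm, hKC i]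
  have key : B (D + S) (D + S - K) =
      B D (D - K) + (∑ i, (B D (C i)) * (B D (C i)) + ∑ i, B D (C i)) := by
    simp only [map_add, map_sub, LinearMap.add_apply, LinearMap.sub_apply,
      hDS, hSD, hSS, hSK]
    ring
  rw [key]
  push_cast
  rw [show (∑ i, (B D (C i) : ℚ) * ((B D (C i) : ℚ) + 1))
      = ∑ i, ((B D (C i) : ℚ) * (B D (C i)) + (B D (C i))) from
    Finset.sum_congr rfl fun i _ => by ring, Finset.sum_add_distrib]
  ring
end

section
/- Let V be a finite-rank free ℤ-module with symmetric bilinear form, D ∈ V, and C₁,…,C_N ∈ V with Cᵢ·Cᵢ < 0, Cᵢ·Cⱼ ≥ 0 for i ≠ j, and D·Cᵢ < 0 for all i. Set nᵢ = ⌈(D·Cᵢ)/(Cᵢ·Cᵢ)⌉ and define D₍ᵢ₎ = D₍ᵢ₋₁₎ - nᵢCᵢ with D₍₀₎ = D, and mᵢ = ⌈(D₍ᵢ₋₁₎·Cᵢ)/(Cᵢ·Cᵢ)⌉. Then nᵢ ≤ mᵢ for every i. -/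
/-- Key inequality of Lemma C.4: with `Cᵢ² < 0`, `Cᵢ·Cⱼ ≥ 0` for `i ≠ j`, and
`D·Cᵢ < 0`, the non-recursive multiplicities `nᵢ = ⌈(D·Cᵢ)/Cᵢ²⌉` are bounded by the
recursive ones `mᵢ = ⌈(D₍ᵢ₋₁₎·Cᵢ)/Cᵢ²⌉`, where `D₍ᵢ₋₁₎ = D - Σ_{j<i} nⱼCⱼ`. -/
theorem stmt_16 {V : Type*} [AddCommGroup V] [Module ℤ V] [Module.Free ℤ V] [Module.Finite ℤ V]
    (B : V →ₗ[ℤ] V →ₗ[ℤ] ℤ) (hsymm : ∀ x y, B x y = B y x)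
    {N : ℕ} (C : Fin N → V)
    (hCneg : ∀ i, B (C i) (C i) < 0)
    (hCC : ∀ i j, i ≠ j → 0 ≤ B (C i) (C j))
    (D : V) (hD : ∀ i, B D (C i) < 0)
    (n : Fin N → ℤ)
    (hn : ∀ i, n i = ⌈(B D (C i) : ℚ) / (B (C i) (C i) : ℚ)⌉)
    (Dprev : Fin N → V)
    (hDprev : ∀ i, Dprev i = D - ∑ j ∈ Finset.univ.filter (· < i), n j • C j)
    (m : Fin N → ℤ)
    (hm : ∀ i, m i = ⌈(B (Dprev i) (C i) : ℚ) / (B (C i) (C i) : ℚ)⌉) :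
    ∀ i, n i ≤ m i := by
  intro i
  have hnpos : ∀ j, 0 ≤ n j := by
    intro j
    rw [hn j]
    have : (0:ℚ) < (B D (C j) : ℚ) / (B (C j) (C j) : ℚ) :=
      div_pos_of_neg_of_neg (by exact_mod_cast hD j) (by exact_mod_cast hCneg j)
    exact Int.ceil_nonneg this.le
  have hle : B (Dprev i) (C i) ≤ B D (C i) := by
    rw [hDprev i, map_sub]
    have : 0 ≤ (B (∑ j ∈ Finset.univ.filter (· < i), n j • C j)) (C i) := by
      rw [map_sum, LinearMap.sum_apply]
      apply Finset.sum_nonneg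
      intro j hj
      have hji : j ≠ i := by
        simp only [Finset.mem_filter] at hj
        exact ne_of_lt hj.2
      have hsm : (B (n j • C j)) (C i) = n j * (B (C j)) (C i) := by
        rw [map_zsmul B (n j) (C j)]
        simp
      rw [hsm]
      exact mul_nonneg (hnpos j) (hCC j i hji)
    simp only [LinearMap.sub_apply]
    linarith
  rw [hn i, hm i]
  apply Int.ceil_le_ceil
  apply div_le_div_of_nonpos_of_le ?_ ?_
  · exact_mod_cast (hCneg i).le
  · exact_mod_cast hle
end
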